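/- Let A be a k-subalgebra of k[x] with field of fractions K, let Φ ∈ A[y] be nonzero, g ∈ k[x] nonzero, and w ∈ Γ^n. If g^w is algebraic over K^w, then m_w^g(Φ) is at most the quotient of deg_y Φ^{w,g} divided by the field extension degree [K^w(g^w) : K^w]. -/

import Mathlib

open MvPolynomial Polynomial

set_option synthInstance.maxHeartbeats 1000000
set_option maxHeartbeats 1000000

variable {k : Type*} [Field k] [CharZero k] {n : ℕ}
variable {Γ : Type*} [AddCommGroup Γ] [LinearOrder Γ] [IsOrderedAddMonoid Γ]

/-- The `w`-degree of a multivariate polynomial, with `wdeg w 0 = ⊥ = -∞`. -/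
noncomputable def wdeg (w : Fin n → Γ) (f : MvPolynomial (Fin n) k) : WithBot Γ :=
  f.support.sup fun d => ((∑ i, d i • w i : Γ) : WithBot Γ)

/-- The leading `w`-homogeneous form `f^w` of `f`. -/
noncomputable def lform (w : Fin n → Γ) (f : MvPolynomial (Fin n) k) :
    MvPolynomial (Fin n) k :=
  letI : DecidableEq (WithBot Γ) := Classical.decEq _
  ∑ d ∈ f.support.filter
      (fun d => ((∑ i, d i • w i : Γ) : WithBot Γ) = wdeg w f),
    MvPolynomial.monomial d (f.coeff d)

/-- `deg_w^g Φ = max_i deg_w (φ_i g^i)` for `Φ = Σ_i φ_i y^i`. -/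
noncomputable def wdegG (w : Fin n → Γ) (g : MvPolynomial (Fin n) k)
    (Φ : Polynomial (MvPolynomial (Fin n) k)) : WithBot Γ :=
  Φ.support.sup fun i => wdeg w (Φ.coeff i * g ^ i)

/-- The leading form `Φ^{w,g}` of `Φ` for the grading in which `x_j` has weight `w_j`
and `y` has weight `deg_w g`: the sum of `φ_i^w y^i` over those `i` with
`deg_w (φ_i g^i) = deg_w^g Φ`. -/
noncomputable def pLform (w : Fin n → Γ) (g : MvPolynomial (Fin n) k)
    (Φ : Polynomial (MvPolynomial (Fin n) k)) : Polynomial (MvPolynomial (Fin n) k) :=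
  letI : DecidableEq (WithBot Γ) := Classical.decEq _
  ∑ i ∈ Φ.support.filter (fun i => wdeg w (Φ.coeff i * g ^ i) = wdegG w g Φ),
    Polynomial.C (lform w (Φ.coeff i)) * Polynomial.X ^ i

/-- `m_w^g(Φ) = min { i : deg_w^g (∂_y^i Φ) = deg_w ((∂_y^i Φ)(g)) }`. -/
noncomputable def mwg (w : Fin n → Γ) (g : MvPolynomial (Fin n) k)
    (Φ : Polynomial (MvPolynomial (Fin n) k)) : ℕ :=
  sInf {i : ℕ |
    wdegG w g (Polynomial.derivative^[i] Φ) = wdeg w ((Polynomial.derivative^[i] Φ).eval g)}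

/-- The `w`-degree of the differential form `dh_1 ∧ ⋯ ∧ dh_s`: the maximum over all
`s`-tuples of indices of the `w`-degree of the corresponding `s × s` Jacobian minor
plus the sum of the corresponding weights (noninjective tuples contribute `⊥`). -/
noncomputable def wedgeDeg (w : Fin n → Γ) {s : ℕ} (h : Fin s → MvPolynomial (Fin n) k) :
    WithBot Γ :=
  Finset.univ.sup fun e : Fin s → Fin n =>
    wdeg w (Matrix.det (Matrix.of fun a b : Fin s => MvPolynomial.pderiv (e b) (h a)))
      + ((∑ b, w (e b) : Γ) : WithBot Γ)

/-- The initial algebra `A^w`: the `k`-subalgebra generated by `f^w` for `f ∈ A \ {0}`. -/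
noncomputable def initAlg (w : Fin n → Γ) (A : Subalgebra k (MvPolynomial (Fin n) k)) :
    Subalgebra k (MvPolynomial (Fin n) k) :=
  Algebra.adjoin k (lform w '' ((A : Set (MvPolynomial (Fin n) k)) \ {0}))

/-- The field of fractions `K^w` of `A^w`, realized as a subfield of the fraction field
of `k[x]`. -/
noncomputable def KW (w : Fin n → Γ) (A : Subalgebra k (MvPolynomial (Fin n) k)) :
    Subfield (FractionRing (MvPolynomial (Fin n) k)) :=
  Subfield.closure
    (algebraMap (MvPolynomial (Fin n) k) (FractionRing (MvPolynomial (Fin n) k)) ''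
      (initAlg w A : Set (MvPolynomial (Fin n) k)))

/-- The field of fractions of a subalgebra `A` of `k[x]`, realized as a subfield of the
fraction field of `k[x]`. -/
noncomputable def fracSub (A : Subalgebra k (MvPolynomial (Fin n) k)) :
    Subfield (FractionRing (MvPolynomial (Fin n) k)) :=
  Subfield.closure
    (algebraMap (MvPolynomial (Fin n) k) (FractionRing (MvPolynomial (Fin n) k)) ''
      (A : Set (MvPolynomial (Fin n) k)))

/-- A polynomial is `w`-homogeneous if all its monomials have the same `w`-degree. -/
def IsWHom (w : Fin n → Γ) (f : MvPolynomial (Fin n) k) : Prop :=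
  ∃ γ : Γ, ∀ d ∈ f.support, (∑ i, d i • w i : Γ) = γ

/-! The initial form `Φ^{w,g}` controls the top-degree part of `Φ(g)`: its value at `g^w` is the
component of `Φ(g)` of degree `deg_w^g Φ`. So `m_w^g(Φ) ≤ r` as soon as `(∂_y^r Φ^{w,g})(g^w) ≠ 0`,
because for `r ≤ deg_y Φ^{w,g}` the initial form of `∂_y^r Φ` is `∂_y^r Φ^{w,g}`. The coefficients
of `Φ^{w,g}` are leading forms of elements of `A`, hence lie in `K^w`. Take for `r` the multiplicity
of `g^w` as a root of `Φ^{w,g}`: the minimal polynomial `μ` of `g^w` over `K^w` is separable, so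
`μ^r` divides `Φ^{w,g}` and `r · [K^w(g^w) : K^w] ≤ deg_y Φ^{w,g}`, while
`(∂_y^r Φ^{w,g})(g^w) ≠ 0` in characteristic zero. -/

section

omit [CharZero k] [IsOrderedAddMonoid Γ]

section WeightedDegree

variable {w : Fin n → Γ} {f h r : MvPolynomial (Fin n) k} {γ : Γ}

theorem wdeg_eq_sup (w : Fin n → Γ) (f : MvPolynomial (Fin n) k) :
    wdeg w f = f.support.sup fun d => (Finsupp.weight w d : WithBot Γ) := by
  simp only [wdeg, Finsupp.weight_eq_sum]

theorem le_wdeg {d : Fin n →₀ ℕ} (hd : d ∈ f.support) :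
    (Finsupp.weight w d : WithBot Γ) ≤ wdeg w f := by
  rw [wdeg_eq_sup]
  exact Finset.le_sup (f := fun d => (Finsupp.weight w d : WithBot Γ)) hd

theorem wdeg_le_iff {δ : WithBot Γ} :
    wdeg w f ≤ δ ↔ ∀ d ∈ f.support, (Finsupp.weight w d : WithBot Γ) ≤ δ := by
  rw [wdeg_eq_sup, Finset.sup_le_iff]

theorem wdeg_lt_iff : wdeg w f < γ ↔ ∀ d ∈ f.support, Finsupp.weight w d < γ := by
  rw [wdeg_eq_sup, Finset.sup_lt_iff (WithBot.bot_lt_coe γ)]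
  simp only [WithBot.coe_lt_coe]

@[simp]
theorem wdeg_zero (w : Fin n → Γ) : wdeg w (0 : MvPolynomial (Fin n) k) = ⊥ := rfl

theorem wdeg_ne_bot (hf : f ≠ 0) : wdeg w f ≠ ⊥ := by
  obtain ⟨d, hd⟩ := MvPolynomial.support_nonempty.2 hf
  exact ne_bot_of_le_ne_bot WithBot.coe_ne_bot (le_wdeg hd)

theorem wdeg_eq_bot_iff : wdeg w f = ⊥ ↔ f = 0 :=
  ⟨fun h => by_contra fun hf => wdeg_ne_bot hf h, by rintro rfl; rfl⟩

theorem wdeg_sum_le {ι : Type*} {s : Finset ι} {F : ι → MvPolynomial (Fin n) k} {δ : WithBot Γ}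
    (hF : ∀ i ∈ s, wdeg w (F i) ≤ δ) : wdeg w (∑ i ∈ s, F i) ≤ δ := by
  classical
  refine wdeg_le_iff.2 fun d hd => ?_
  obtain ⟨i, hi, hd⟩ := Finset.mem_biUnion.1 (MvPolynomial.support_sum hd)
  exact (le_wdeg hd).trans (hF i hi)

theorem wdeg_add_le (w : Fin n → Γ) (f h : MvPolynomial (Fin n) k) :
    wdeg w (f + h) ≤ max (wdeg w f) (wdeg w h) := by
  refine wdeg_le_iff.2 fun d hd => ?_
  rcases Finset.mem_union.1 (MvPolynomial.support_add hd) with hd | hd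
  · exact le_max_of_le_left (le_wdeg hd)
  · exact le_max_of_le_right (le_wdeg hd)

theorem MvPolynomial.IsWeightedHomogeneous.wdeg_eq (hh : IsWeightedHomogeneous w h γ)
    (h0 : h ≠ 0) :
    wdeg w h = γ := by
  obtain ⟨d, hd⟩ := MvPolynomial.support_nonempty.2 h0
  refine le_antisymm (wdeg_le_iff.2 fun e he => ?_) ?_
  · rw [hh (MvPolynomial.mem_support_iff.1 he)]
  · rw [← hh (MvPolynomial.mem_support_iff.1 hd)]
    exact le_wdeg hd

theorem le_wdeg_of_weightedHomogeneousComponent_ne_zero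
    (hf : weightedHomogeneousComponent w γ f ≠ 0) : (γ : WithBot Γ) ≤ wdeg w f := by
  classical
  obtain ⟨d, hd⟩ := MvPolynomial.support_nonempty.2 hf
  rw [support_weightedHomogeneousComponent, Finset.mem_filter] at hd
  rw [← hd.2]
  exact le_wdeg hd.1

theorem weightedHomogeneousComponent_eq_zero_of_wdeg_lt (hf : wdeg w f < γ) :
    weightedHomogeneousComponent w γ f = 0 :=
  weightedHomogeneousComponent_eq_zero' γ f fun d hd => (wdeg_lt_iff.1 hf d hd).ne

theorem lform_eq_weightedHomogeneousComponent (hf : wdeg w f = γ) :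
    lform w f = weightedHomogeneousComponent w γ f := by
  classical
  rw [lform, weightedHomogeneousComponent_apply]
  refine Finset.sum_congr (Finset.ext fun d => ?_) fun _ _ => rfl
  simp only [Finset.mem_filter, hf, WithBot.coe_inj, Finsupp.weight_eq_sum]

theorem isWeightedHomogeneous_lform (hf : wdeg w f = γ) :
    IsWeightedHomogeneous w (lform w f) γ := by
  rw [lform_eq_weightedHomogeneousComponent hf]
  exact weightedHomogeneousComponent_isWeightedHomogeneous γ f

@[simp]
theorem lform_zero (w : Fin n → Γ) : lform w (0 : MvPolynomial (Fin n) k) = 0 := by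
  simp [lform]

theorem lform_ne_zero (hf : f ≠ 0) : lform w f ≠ 0 := by
  classical
  obtain ⟨d, hd, hdeg⟩ := Finset.exists_mem_eq_sup _ (MvPolynomial.support_nonempty.2 hf)
    fun d => (Finsupp.weight w d : WithBot Γ)
  rw [← wdeg_eq_sup] at hdeg
  rw [lform_eq_weightedHomogeneousComponent hdeg, ← MvPolynomial.support_nonempty,
    support_weightedHomogeneousComponent]
  exact ⟨d, Finset.mem_filter.2 ⟨hd, rfl⟩⟩

theorem wdeg_sub_lform_lt (hf : wdeg w f = γ) : wdeg w (f - lform w f) < γ := by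
  classical
  rw [lform_eq_weightedHomogeneousComponent hf, wdeg_lt_iff]
  intro d hd
  rw [MvPolynomial.mem_support_iff, MvPolynomial.coeff_sub,
    coeff_weightedHomogeneousComponent] at hd
  have hne : Finsupp.weight w d ≠ γ := fun h => hd (by simp [h])
  have hle : (Finsupp.weight w d : WithBot Γ) ≤ γ :=
    hf ▸ le_wdeg (MvPolynomial.mem_support_iff.2 fun h0 => hd (by simp [h0]))
  exact lt_of_le_of_ne (WithBot.coe_le_coe.1 hle) hne

theorem wdeg_add_eq_and_lform_add_eq (hh : IsWeightedHomogeneous w h γ) (h0 : h ≠ 0)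
    (hr : wdeg w r < γ) : wdeg w (h + r) = γ ∧ lform w (h + r) = h := by
  have hcomp : weightedHomogeneousComponent w γ (h + r) = h := by
    rw [map_add, hh.weightedHomogeneousComponent_same,
      weightedHomogeneousComponent_eq_zero_of_wdeg_lt hr, add_zero]
  have hdeg : wdeg w (h + r) = γ := by
    refine le_antisymm ((wdeg_add_le w h r).trans (max_le (hh.wdeg_eq h0).le hr.le)) ?_
    exact le_wdeg_of_weightedHomogeneousComponent_ne_zero (by rwa [hcomp])
  exact ⟨hdeg, (lform_eq_weightedHomogeneousComponent hdeg).trans hcomp⟩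

theorem lform_of_isWeightedHomogeneous (hh : IsWeightedHomogeneous w h γ) : lform w h = h := by
  rcases eq_or_ne h 0 with rfl | h0
  · exact lform_zero w
  · simpa using (wdeg_add_eq_and_lform_add_eq hh h0 (r := 0) (by simp)).2

section

variable [IsOrderedAddMonoid Γ]

theorem wdeg_mul_le (w : Fin n → Γ) (f h : MvPolynomial (Fin n) k) :
    wdeg w (f * h) ≤ wdeg w f + wdeg w h := by
  refine wdeg_le_iff.2 fun d hd => ?_
  obtain ⟨a, ha, b, hb, rfl⟩ := Finset.mem_add.1 (MvPolynomial.support_mul f h hd)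
  rw [map_add, WithBot.coe_add]
  exact add_le_add (le_wdeg ha) (le_wdeg hb)

theorem wdeg_mul_eq_and_lform_mul_eq (hf : f ≠ 0) (hh : h ≠ 0) :
    wdeg w (f * h) = wdeg w f + wdeg w h ∧ lform w (f * h) = lform w f * lform w h := by
  obtain ⟨α, hα⟩ := WithBot.ne_bot_iff_exists.1 (wdeg_ne_bot (w := w) hf)
  obtain ⟨β, hβ⟩ := WithBot.ne_bot_iff_exists.1 (wdeg_ne_bot (w := w) hh)
  have hlow : wdeg w ((f - lform w f) * h + lform w f * (h - lform w h)) < (α + β : Γ) := by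
    refine (wdeg_add_le w _ _).trans_lt (max_lt ?_ ?_) <;>
      refine (wdeg_mul_le w _ _).trans_lt ?_ <;> rw [WithBot.coe_add]
    · rw [← hβ]
      exact WithBot.add_lt_add_right WithBot.coe_ne_bot (wdeg_sub_lform_lt hα.symm)
    · rw [(isWeightedHomogeneous_lform hα.symm).wdeg_eq (lform_ne_zero hf)]
      exact WithBot.add_lt_add_left WithBot.coe_ne_bot (wdeg_sub_lform_lt hβ.symm)
  have key := wdeg_add_eq_and_lform_add_eq
    ((isWeightedHomogeneous_lform hα.symm).mul (isWeightedHomogeneous_lform hβ.symm))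
    (mul_ne_zero (lform_ne_zero hf) (lform_ne_zero hh)) hlow
  rw [show lform w f * lform w h + ((f - lform w f) * h + lform w f * (h - lform w h)) = f * h
    by ring] at key
  exact ⟨by rw [key.1, ← hα, ← hβ, WithBot.coe_add], key.2⟩

theorem wdeg_mul (w : Fin n → Γ) (f h : MvPolynomial (Fin n) k) :
    wdeg w (f * h) = wdeg w f + wdeg w h := by
  rcases eq_or_ne f 0 with rfl | hf
  · simp
  rcases eq_or_ne h 0 with rfl | hh
  · simp
  exact (wdeg_mul_eq_and_lform_mul_eq hf hh).1

theorem lform_mul (w : Fin n → Γ) (f h : MvPolynomial (Fin n) k) :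
    lform w (f * h) = lform w f * lform w h := by
  rcases eq_or_ne f 0 with rfl | hf
  · simp
  rcases eq_or_ne h 0 with rfl | hh
  · simp
  exact (wdeg_mul_eq_and_lform_mul_eq hf hh).2

theorem lform_pow (w : Fin n → Γ) (f : MvPolynomial (Fin n) k) (i : ℕ) :
    lform w (f ^ i) = lform w f ^ i := by
  induction i with
  | zero => exact lform_of_isWeightedHomogeneous (isWeightedHomogeneous_one k w)
  | succ i ih => rw [pow_succ, lform_mul, ih, pow_succ]

theorem wdeg_nsmul [CharZero k] (w : Fin n → Γ) {m : ℕ} (hm : m ≠ 0)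
    (f : MvPolynomial (Fin n) k) :
    wdeg w (m • f) = wdeg w f := by
  have hC : IsWeightedHomogeneous w (MvPolynomial.C (m : k)) 0 := isWeightedHomogeneous_C w _
  rw [nsmul_eq_mul, ← map_natCast MvPolynomial.C, wdeg_mul,
    hC.wdeg_eq (by simpa using hm), WithBot.coe_zero, zero_add]

theorem lform_nsmul (w : Fin n → Γ) (m : ℕ) (f : MvPolynomial (Fin n) k) :
    lform w (m • f) = m • lform w f := by
  rw [nsmul_eq_mul, nsmul_eq_mul, ← map_natCast MvPolynomial.C, lform_mul,
    lform_of_isWeightedHomogeneous (isWeightedHomogeneous_C w _)]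

end

end WeightedDegree

section InitialForm

variable {w : Fin n → Γ} {g : MvPolynomial (Fin n) k} {Φ : Polynomial (MvPolynomial (Fin n) k)}

theorem wdeg_term_le_wdegG (w : Fin n → Γ) (g : MvPolynomial (Fin n) k)
    (Φ : Polynomial (MvPolynomial (Fin n) k)) (i : ℕ) :
    wdeg w (Φ.coeff i * g ^ i) ≤ wdegG w g Φ := by
  by_cases hi : i ∈ Φ.support
  · exact Finset.le_sup (f := fun i => wdeg w (Φ.coeff i * g ^ i)) hi
  · simp [Polynomial.notMem_support_iff.1 hi]

theorem exists_wdegG_eq_wdeg_term (w : Fin n → Γ) (g : MvPolynomial (Fin n) k)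
    (Φ : Polynomial (MvPolynomial (Fin n) k)) :
    ∃ i, wdegG w g Φ = wdeg w (Φ.coeff i * g ^ i) := by
  rcases Φ.support.eq_empty_or_nonempty with hΦ | hΦ
  · exact ⟨0, by simp [wdegG, Polynomial.support_eq_empty.1 hΦ]⟩
  · obtain ⟨i, -, hi⟩ := Finset.exists_mem_eq_sup _ hΦ fun i => wdeg w (Φ.coeff i * g ^ i)
    exact ⟨i, hi⟩

theorem coeff_pLform (w : Fin n → Γ) (g : MvPolynomial (Fin n) k)
    (Φ : Polynomial (MvPolynomial (Fin n) k)) (j : ℕ) :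
    (pLform w g Φ).coeff j =
      if wdeg w (Φ.coeff j * g ^ j) = wdegG w g Φ then lform w (Φ.coeff j) else 0 := by
  classical
  simp only [pLform, Polynomial.finsetSum_coeff, Polynomial.coeff_C_mul_X_pow]
  rw [Finset.sum_ite_eq]
  simp only [Finset.mem_filter, Polynomial.mem_support_iff]
  by_cases hj : Φ.coeff j = 0 <;> simp [hj]

theorem pLform_ne_zero (hΦ : Φ ≠ 0) : pLform w g Φ ≠ 0 := by
  obtain ⟨i, hi, hmax⟩ := Finset.exists_mem_eq_sup _ (Polynomial.support_nonempty.2 hΦ)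
    fun i => wdeg w (Φ.coeff i * g ^ i)
  intro h0
  have hi' := Polynomial.ext_iff.1 h0 i
  rw [coeff_pLform, if_pos (show _ = wdegG w g Φ from hmax.symm), Polynomial.coeff_zero] at hi'
  exact lform_ne_zero (Polynomial.mem_support_iff.1 hi) hi'

theorem wdeg_term_natDegree_pLform (hΦ : Φ ≠ 0) :
    wdeg w (Φ.coeff (pLform w g Φ).natDegree * g ^ (pLform w g Φ).natDegree) = wdegG w g Φ := by
  have h := Polynomial.leadingCoeff_ne_zero.2 (pLform_ne_zero (w := w) (g := g) hΦ)
  rw [Polynomial.leadingCoeff, coeff_pLform] at h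
  by_contra hne
  exact h (if_neg hne)

section

variable [IsOrderedAddMonoid Γ]

theorem eval_lform_pLform (w : Fin n → Γ) (g : MvPolynomial (Fin n) k)
    (Φ : Polynomial (MvPolynomial (Fin n) k)) :
    (pLform w g Φ).eval (lform w g) = ∑ i ∈ Φ.support,
      if wdeg w (Φ.coeff i * g ^ i) = wdegG w g Φ then lform w (Φ.coeff i * g ^ i) else 0 := by
  rw [pLform, Polynomial.eval_finsetSum, Finset.sum_filter]
  refine Finset.sum_congr rfl fun i _ => ?_
  split_ifs <;> simp [lform_mul, lform_pow]

theorem wdeg_eval_eq_wdegG (hne : (pLform w g Φ).eval (lform w g) ≠ 0) :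
    wdeg w (Φ.eval g) = wdegG w g Φ := by
  have hbot : wdegG w g Φ ≠ ⊥ := by
    refine fun hbot => hne ((eval_lform_pLform w g Φ).trans (Finset.sum_eq_zero fun i _ => ?_))
    split_ifs with h
    · rw [wdeg_eq_bot_iff.1 (h.trans hbot), lform_zero]
    · rfl
  obtain ⟨D, hD⟩ := WithBot.ne_bot_iff_exists.1 hbot
  have hsum : Φ.eval g = ∑ i ∈ Φ.support, Φ.coeff i * g ^ i := Polynomial.eval_eq_sum
  have hcomp : weightedHomogeneousComponent w D (Φ.eval g) = (pLform w g Φ).eval (lform w g) := by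
    rw [hsum, map_sum, eval_lform_pLform]
    refine Finset.sum_congr rfl fun i _ => ?_
    split_ifs with h
    · exact (lform_eq_weightedHomogeneousComponent (h.trans hD.symm)).symm
    · refine weightedHomogeneousComponent_eq_zero_of_wdeg_lt (lt_of_le_of_ne ?_ (hD ▸ h))
      exact hD ▸ wdeg_term_le_wdegG w g Φ i
  refine le_antisymm ?_ (hD ▸ le_wdeg_of_weightedHomogeneousComponent_ne_zero (hcomp ▸ hne))
  rw [hsum]
  exact wdeg_sum_le fun i _ => wdeg_term_le_wdegG w g Φ i

theorem lform_coeff_iterate_derivative (w : Fin n → Γ) (Φ : Polynomial (MvPolynomial (Fin n) k))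
    (i j : ℕ) :
    lform w ((derivative^[i] Φ).coeff j) = (j + i).descFactorial i • lform w (Φ.coeff (j + i)) := by
  rw [Polynomial.coeff_iterate_derivative, lform_nsmul]

variable [CharZero k]

theorem wdeg_coeff_iterate_derivative_mul_add (w : Fin n → Γ) (g : MvPolynomial (Fin n) k)
    (Φ : Polynomial (MvPolynomial (Fin n) k)) (i j : ℕ) :
    wdeg w ((derivative^[i] Φ).coeff j * g ^ j) + wdeg w (g ^ i) =
      wdeg w (Φ.coeff (j + i) * g ^ (j + i)) := by
  have hi : (j + i).descFactorial i ≠ 0 := by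
    rw [Ne, Nat.descFactorial_eq_zero_iff_lt]
    omega
  rw [← wdeg_mul, Polynomial.coeff_iterate_derivative, smul_mul_assoc, smul_mul_assoc,
    wdeg_nsmul w hi, mul_assoc, ← pow_add]

theorem wdegG_iterate_derivative_add (hΦ : Φ ≠ 0) {i : ℕ}
    (hi : i ≤ (pLform w g Φ).natDegree) :
    wdegG w g (derivative^[i] Φ) + wdeg w (g ^ i) = wdegG w g Φ := by
  set t := (pLform w g Φ).natDegree
  refine le_antisymm ?_ ?_
  · obtain ⟨j, hj⟩ := exists_wdegG_eq_wdeg_term w g (derivative^[i] Φ)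
    rw [hj, wdeg_coeff_iterate_derivative_mul_add]
    exact wdeg_term_le_wdegG w g Φ _
  · calc wdegG w g Φ = wdeg w (Φ.coeff t * g ^ t) := (wdeg_term_natDegree_pLform hΦ).symm
      _ = wdeg w ((derivative^[i] Φ).coeff (t - i) * g ^ (t - i)) + wdeg w (g ^ i) := by
        rw [wdeg_coeff_iterate_derivative_mul_add, Nat.sub_add_cancel hi]
      _ ≤ wdegG w g (derivative^[i] Φ) + wdeg w (g ^ i) :=
        add_le_add_left (wdeg_term_le_wdegG w g _ _) _

theorem pLform_iterate_derivative (hg : g ≠ 0) (hΦ : Φ ≠ 0) {i : ℕ}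
    (hi : i ≤ (pLform w g Φ).natDegree) :
    pLform w g (derivative^[i] Φ) = derivative^[i] (pLform w g Φ) := by
  ext j : 1
  have hcancel := WithBot.add_right_inj (x := wdeg w ((derivative^[i] Φ).coeff j * g ^ j))
    (y := wdegG w g (derivative^[i] Φ)) (wdeg_ne_bot (w := w) (pow_ne_zero i hg))
  rw [wdeg_coeff_iterate_derivative_mul_add, wdegG_iterate_derivative_add hΦ hi] at hcancel
  rw [Polynomial.coeff_iterate_derivative (p := pLform w g Φ), coeff_pLform, coeff_pLform,
    lform_coeff_iterate_derivative]
  by_cases h : wdeg w (Φ.coeff (j + i) * g ^ (j + i)) = wdegG w g Φ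
  · rw [if_pos (hcancel.1 h), if_pos h]
  · rw [if_neg (mt hcancel.2 h), if_neg h, smul_zero]

end

end InitialForm

section InitialAlgebra

variable {w : Fin n → Γ} {A : Subalgebra k (MvPolynomial (Fin n) k)} {g : MvPolynomial (Fin n) k}
  {Φ : Polynomial (MvPolynomial (Fin n) k)}

theorem lform_mem_initAlg {f : MvPolynomial (Fin n) k} (hf : f ∈ A) : lform w f ∈ initAlg w A := by
  rcases eq_or_ne f 0 with rfl | h0
  · rw [lform_zero]
    exact zero_mem _
  · exact Algebra.subset_adjoin ⟨f, ⟨hf, h0⟩, rfl⟩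

theorem map_pLform_mem_lifts (hΦA : ∀ i, Φ.coeff i ∈ A) :
    (pLform w g Φ).map (algebraMap (MvPolynomial (Fin n) k) (FractionRing (MvPolynomial (Fin n) k)))
      ∈ Polynomial.lifts (algebraMap (KW w A) (FractionRing (MvPolynomial (Fin n) k))) := by
  refine (Polynomial.lifts_iff_coeff_lifts _).2 fun j => ?_
  have hj : (pLform w g Φ).coeff j ∈ initAlg w A := by
    rw [coeff_pLform]
    split_ifs
    exacts [lform_mem_initAlg (hΦA j), zero_mem _]
  rw [Polynomial.coeff_map]
  exact ⟨⟨_, Subfield.subset_closure ⟨_, hj, rfl⟩⟩, rfl⟩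

end InitialAlgebra

end

section MinimalPolynomial

variable {K L : Type*} [Field K] [Field L] [Algebra K L] [CharZero L] {x : L}

theorem rootMultiplicity_map_minpoly (hx : IsIntegral K x) :
    ((minpoly K x).map (algebraMap K L)).rootMultiplicity x = 1 := by
  have : CharZero K := (algebraMap K L).charZero
  have hsep := (minpoly.irreducible hx).separable.map (f := algebraMap K L)
  refine le_antisymm (Polynomial.rootMultiplicity_le_one_of_separable hsep x) ?_
  rw [Nat.one_le_iff_ne_zero, ← Nat.pos_iff_ne_zero,
    Polynomial.rootMultiplicity_pos (Polynomial.map_ne_zero (minpoly.ne_zero hx)),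
    Polynomial.IsRoot, Polynomial.eval_map_algebraMap, minpoly.aeval]

theorem exists_eval_iterate_derivative_ne_zero (hx : IsIntegral K x) {p : Polynomial L}
    (hp : p ∈ Polynomial.lifts (algebraMap K L)) (hp0 : p ≠ 0) :
    ∃ r, r * (minpoly K x).natDegree ≤ p.natDegree ∧ (derivative^[r] p).eval x ≠ 0 := by
  obtain ⟨q, hq⟩ := (Polynomial.mem_lifts p).1 hp
  have hq0 : q ≠ 0 := by rintro rfl; exact hp0 (hq ▸ Polynomial.map_zero _)
  obtain ⟨r, σ, hσ, rfl⟩ := WfDvdMonoid.max_power_factor hq0 (minpoly.irreducible hx)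
  have hσx : ¬ (σ.map (algebraMap K L)).IsRoot x := by
    rw [Polynomial.IsRoot, Polynomial.eval_map_algebraMap]
    exact fun h => hσ (minpoly.dvd K x h)
  have hmult : p.rootMultiplicity x = r := by
    classical
    rw [← hq, Polynomial.map_mul,
      Polynomial.rootMultiplicity_mul (by rwa [← Polynomial.map_mul, hq]),
      Polynomial.rootMultiplicity_eq_zero hσx, add_zero, ← Polynomial.count_roots,
      Polynomial.map_pow, Polynomial.roots_pow, Multiset.count_nsmul, Polynomial.count_roots,
      rootMultiplicity_map_minpoly hx, mul_one]
  refine ⟨r, ?_, ?_⟩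
  · rw [← hq, Polynomial.natDegree_map, ← Polynomial.natDegree_pow]
    exact Polynomial.natDegree_le_of_dvd (dvd_mul_right _ _) hq0
  · rw [← hmult, Polynomial.eval_iterate_derivative_rootMultiplicity, nsmul_eq_mul]
    exact mul_ne_zero (Nat.cast_ne_zero.2 (Nat.factorial_ne_zero _))
      (Polynomial.eval_divByMonic_pow_rootMultiplicity_ne_zero x hp0)

end MinimalPolynomial

/-- If `A` is a `k`-subalgebra of `k[x]`, `Φ ∈ A[y]` nonzero, `g ∈ k[x]` nonzero, and
`g^w` is algebraic over `K^w`, then `m_w^g(Φ)` is at most the quotient of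
`deg_y Φ^{w,g}` divided by `[K^w(g^w) : K^w]`. -/
theorem stmt5 (A : Subalgebra k (MvPolynomial (Fin n) k))
    (Φ : Polynomial (MvPolynomial (Fin n) k)) (hΦ : Φ ≠ 0) (hΦA : ∀ i, Φ.coeff i ∈ A)
    (g : MvPolynomial (Fin n) k) (hg : g ≠ 0) (w : Fin n → Γ)
    (halg : IsAlgebraic (KW w A)
      (algebraMap (MvPolynomial (Fin n) k) (FractionRing (MvPolynomial (Fin n) k))
        (lform w g))) :
    mwg w g Φ ≤
      (pLform w g Φ).natDegree /
        Module.finrank (KW w A)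
          (IntermediateField.adjoin (KW w A)
            {algebraMap (MvPolynomial (Fin n) k) (FractionRing (MvPolynomial (Fin n) k))
              (lform w g)}) := by
  have hι := IsFractionRing.injective (MvPolynomial (Fin n) k)
    (FractionRing (MvPolynomial (Fin n) k))
  have hx := halg.isIntegral
  have hdeg := minpoly.natDegree_pos hx
  obtain ⟨r, hr_deg, hr_ne⟩ := exists_eval_iterate_derivative_ne_zero hx
    (map_pLform_mem_lifts hΦA) ((Polynomial.map_ne_zero_iff hι).2 (pLform_ne_zero hΦ))
  rw [Polynomial.natDegree_map_eq_of_injective hι] at hr_deg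
  rw [Polynomial.iterate_derivative_map, Polynomial.eval_map, Polynomial.eval₂_at_apply,
    map_ne_zero_iff _ hι] at hr_ne
  have hr : r ≤ (pLform w g Φ).natDegree := (Nat.le_mul_of_pos_right r hdeg).trans hr_deg
  rw [← pLform_iterate_derivative hg hΦ hr] at hr_ne
  calc mwg w g Φ ≤ r := Nat.sInf_le (wdeg_eval_eq_wdegG hr_ne).symm
    _ ≤ _ := by
      rwa [IntermediateField.adjoin.finrank hx, Nat.le_div_iff_mul_le hdeg]
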